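/- arXiv:2212.02604 — 4 statements merged into one kernel-verified Lean document; each statement's English description precedes it below -/
import Mathlib

section
/- Let E, A be real n×n matrices. Let S be a real matrix whose columns form an orthonormal basis of ker(E), and let T be a real matrix whose columns form an orthonormal basis of ker(Eᵀ). Then the matrix [E, AS] (columns of E followed by columns of AS) has rank n if and only if TᵀAS is square and nonsingular. (Equivalence of conditions 3 and 4 of Lemma 1.) -/
/-!
The columns of `T` span `ker Eᵀ`, so `ker Tᵀ = range E`, while `Tᵀ` is onto because
`Tᵀ T = 1`. Hence `[E, AS]` has full rank, i.e. `range E ⊔ range (AS) = ⊤`, exactly when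
`Tᵀ` maps `range (AS)` onto everything, i.e. when `TᵀAS` is surjective. Finally
`k = dim ker E = dim ker Eᵀ = k'`, so `TᵀAS` is square and surjectivity is bijectivity.
-/

open Matrix

namespace Matrix

section CommSemiring

variable {R : Type*} [CommSemiring R] {m k : Type*} [Fintype m] [Fintype k] [DecidableEq k]
  {B : Matrix k m R} {S : Matrix m k R}

lemma mulVecLin_injective_of_mul_eq_one (h : B * S = 1) : Function.Injective S.mulVecLin :=
  Function.LeftInverse.injective (g := B.mulVecLin) fun v => by
    simp only [mulVecLin_apply, mulVec_mulVec, h, one_mulVec]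

lemma mulVecLin_surjective_of_mul_eq_one (h : B * S = 1) : Function.Surjective B.mulVecLin :=
  Function.RightInverse.surjective (g := S.mulVecLin) fun v => by
    simp only [mulVecLin_apply, mulVec_mulVec, h, one_mulVec]

end CommSemiring

lemma range_mulVecLin_fromCols {R : Type*} [CommSemiring R] {m n₁ n₂ : Type*} [Fintype n₁]
    [Fintype n₂] (A : Matrix m n₁ R) (B : Matrix m n₂ R) :
    LinearMap.range (fromCols A B).mulVecLin =
      LinearMap.range A.mulVecLin ⊔ LinearMap.range B.mulVecLin := by
  apply le_antisymm
  · rintro x ⟨v, rfl⟩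
    rw [mulVecLin_apply, ← Sum.elim_comp_inl_inr v, fromCols_mulVec_sumElim]
    exact Submodule.add_mem_sup ⟨_, rfl⟩ ⟨_, rfl⟩
  · refine sup_le ?_ ?_ <;> rintro x ⟨v, rfl⟩
    · exact ⟨Sum.elim v 0, by simp⟩
    · exact ⟨Sum.elim 0 v, by simp⟩

variable {K : Type*} [Field K] {m k : Type*} [Fintype m] [Fintype k]

lemma rank_eq_card_iff_range_eq_top {n : Type*} [Fintype n] (M : Matrix m n K) :
    M.rank = Fintype.card m ↔ LinearMap.range M.mulVecLin = ⊤ := by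
  rw [rank, ← Module.finrank_fintype_fun_eq_card (R := K), Submodule.eq_top_iff_finrank_eq]

lemma mul_eq_zero_of_range_le_ker {l n : Type*} [Fintype n] {M : Matrix l m K}
    {N : Matrix m n K} (h : LinearMap.range N.mulVecLin ≤ LinearMap.ker M.mulVecLin) :
    M * N = 0 := by
  classical
  rw [LinearMap.range_le_ker_iff] at h
  apply toLin'.injective
  rwa [toLin'_mul, map_zero, toLin'_apply', toLin'_apply']

lemma finrank_ker_mulVecLin_eq_card {n : Type*} [Fintype n] {M : Matrix n m K}
    {S : Matrix m k K} (hS : Function.Injective S.mulVecLin)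
    (hSM : LinearMap.range S.mulVecLin = LinearMap.ker M.mulVecLin) :
    Module.finrank K (LinearMap.ker M.mulVecLin) = Fintype.card k := by
  rw [← hSM, LinearMap.finrank_range_of_inj hS, Module.finrank_fintype_fun_eq_card]

lemma finrank_ker_mulVecLin_transpose (E : Matrix m m K) :
    Module.finrank K (LinearMap.ker Eᵀ.mulVecLin) =
      Module.finrank K (LinearMap.ker E.mulVecLin) := by
  have hE := E.mulVecLin.finrank_range_add_finrank_ker
  have hEt := Eᵀ.mulVecLin.finrank_range_add_finrank_ker
  have hrank := E.rank_transpose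
  unfold rank at hrank
  omega

lemma ker_mulVecLin_transpose_eq_range [DecidableEq k] {E : Matrix m m K} {T : Matrix m k K}
    (hT : Tᵀ * T = 1) (hTE : LinearMap.range T.mulVecLin = LinearMap.ker Eᵀ.mulVecLin) :
    LinearMap.ker Tᵀ.mulVecLin = LinearMap.range E.mulVecLin := by
  have hle : LinearMap.range E.mulVecLin ≤ LinearMap.ker Tᵀ.mulVecLin := by
    rw [LinearMap.range_le_ker_iff, ← mulVecLin_mul, ← transpose_transpose E, ← transpose_mul,
      mul_eq_zero_of_range_le_ker hTE.le, transpose_zero, mulVecLin_zero]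
  refine (Submodule.eq_of_le_of_finrank_le hle ?_).symm
  have hT' := Tᵀ.mulVecLin.finrank_range_add_finrank_ker
  rw [LinearMap.range_eq_top.2 (mulVecLin_surjective_of_mul_eq_one hT), finrank_top] at hT'
  simp only [Module.finrank_fintype_fun_eq_card] at hT'
  have hE := E.mulVecLin.finrank_range_add_finrank_ker
  rw [← finrank_ker_mulVecLin_transpose,
    finrank_ker_mulVecLin_eq_card (mulVecLin_injective_of_mul_eq_one hT) hTE,
    Module.finrank_fintype_fun_eq_card] at hE
  omega

end Matrix

/-- Equivalence of conditions 3 and 4 of Lemma 1: the matrix `[E, AS]` has rank `n`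
if and only if `TᵀAS` is square and nonsingular (expressed as bijectivity of the
associated linear map). -/
theorem columns_rank_eq_iff_bijective
    (n k k' : ℕ) (E A : Matrix (Fin n) (Fin n) ℝ)
    (S : Matrix (Fin n) (Fin k) ℝ) (T : Matrix (Fin n) (Fin k') ℝ)
    (hS1 : Sᵀ * S = 1)
    (hS2 : LinearMap.range S.mulVecLin = LinearMap.ker E.mulVecLin)
    (hT1 : Tᵀ * T = 1)
    (hT2 : LinearMap.range T.mulVecLin = LinearMap.ker Eᵀ.mulVecLin) :
    (Matrix.fromCols E (A * S)).rank = n ↔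
      Function.Bijective (Matrix.mulVecLin (Tᵀ * A * S)) := by
  obtain rfl : k = k' := by
    simpa only [Fintype.card_fin,
      finrank_ker_mulVecLin_eq_card (mulVecLin_injective_of_mul_eq_one hS1) hS2,
      finrank_ker_mulVecLin_eq_card (mulVecLin_injective_of_mul_eq_one hT1) hT2]
      using (finrank_ker_mulVecLin_transpose E).symm
  have hrank := rank_eq_card_iff_range_eq_top (fromCols E (A * S))
  rw [Fintype.card_fin] at hrank
  have hTt := LinearMap.range_eq_top.2 (mulVecLin_surjective_of_mul_eq_one hT1)
  rw [hrank, range_mulVecLin_fromCols, ← ker_mulVecLin_transpose_eq_range hT1 hT2, sup_comm,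
    ← LinearMap.map_eq_top_iff hTt,
    ← LinearMap.range_comp, ← mulVecLin_mul, ← Matrix.mul_assoc, LinearMap.range_eq_top]
  exact ⟨fun h => ⟨LinearMap.injective_iff_surjective.2 h, h⟩, And.right⟩
end

section
/- Let E, A be real n×n matrices and let T be a real matrix whose columns form an orthonormal basis of the left nullspace ker(Eᵀ). Then the rank of the stacked matrix [E ; TᵀA] equals the rank of the n×n matrix E + T Tᵀ A. (Rank identity inside condition 2 of Lemma 1.) -/
/-!
Because the columns of `T` lie in `ker Eᵀ` and are orthonormal, `Tᵀ E = 0` and `Tᵀ T = 1`.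
Applying `Tᵀ` to `(E + T Tᵀ A) x = 0` therefore gives `Tᵀ A x = 0`, and then `E x = 0`:
both matrices have kernel `ker E ∩ ker (Tᵀ A)`, so by rank–nullity they have the same rank.
-/

open Matrix

namespace Matrix

variable {R m n k l : Type*}

theorem mul_eq_zero_of_range_mulVecLin_le_ker [CommSemiring R] [Fintype m] [Fintype n]
    {B : Matrix k m R} {C : Matrix m n R}
    (h : LinearMap.range C.mulVecLin ≤ LinearMap.ker B.mulVecLin) : B * C = 0 := by
  classical
  rw [LinearMap.range_le_ker_iff, ← mulVecLin_mul] at h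
  exact toLin'.injective (by rw [toLin'_apply', h, map_zero])

theorem ker_mulVecLin_fromRows [CommSemiring R] [Fintype n] (A₁ : Matrix m n R)
    (A₂ : Matrix l n R) :
    LinearMap.ker (fromRows A₁ A₂).mulVecLin =
      LinearMap.ker A₁.mulVecLin ⊓ LinearMap.ker A₂.mulVecLin := by
  ext v
  simp [fromRows_mulVec, funext_iff, Sum.forall]

theorem ker_mulVecLin_add_mul [CommSemiring R] [Fintype m] [Fintype n] [Fintype k] [DecidableEq k]
    {E : Matrix m n R} {T : Matrix m k R} {L : Matrix k m R} (B : Matrix k n R)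
    (hLT : L * T = 1) (hLE : L * E = 0) :
    LinearMap.ker (E + T * B).mulVecLin =
      LinearMap.ker E.mulVecLin ⊓ LinearMap.ker B.mulVecLin := by
  ext v
  simp only [Submodule.mem_inf, LinearMap.mem_ker, mulVecLin_apply, add_mulVec,
    ← mulVec_mulVec]
  refine ⟨fun h ↦ ?_, fun ⟨hE, hB⟩ ↦ by rw [hE, hB, mulVec_zero, add_zero]⟩
  have hB : B *ᵥ v = 0 :=
    calc B *ᵥ v = L *ᵥ (E *ᵥ v + T *ᵥ (B *ᵥ v)) := by
          rw [mulVec_add, mulVec_mulVec, mulVec_mulVec, hLE, hLT, zero_mulVec, one_mulVec,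
            zero_add]
      _ = 0 := by rw [h, mulVec_zero]
  rw [hB, mulVec_zero, add_zero] at h
  exact ⟨h, hB⟩

theorem rank_eq_rank_of_ker_mulVecLin_eq [Field R] [Fintype n] {M : Matrix m n R}
    {N : Matrix l n R} (h : LinearMap.ker M.mulVecLin = LinearMap.ker N.mulVecLin) :
    M.rank = N.rank := by
  have hM := M.mulVecLin.finrank_range_add_finrank_ker
  have hN := N.mulVecLin.finrank_range_add_finrank_ker
  rw [h] at hM
  exact Nat.add_right_cancel (hM.trans hN.symm)

end Matrix

/-- Rank identity inside condition 2 of Lemma 1: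
`rank [E ; TᵀA] = rank (E + T Tᵀ A)`, where the columns of `T` form an
orthonormal basis of the left nullspace `ker Eᵀ`. -/
theorem rank_stacked_eq_rank_add_proj
    (n k : ℕ) (E A : Matrix (Fin n) (Fin n) ℝ)
    (T : Matrix (Fin n) (Fin k) ℝ)
    (hT1 : Tᵀ * T = 1)
    (hT2 : LinearMap.range T.mulVecLin = LinearMap.ker Eᵀ.mulVecLin) :
    (Matrix.fromRows E (Tᵀ * A)).rank = (E + T * Tᵀ * A).rank := by
  have hTE : Tᵀ * E = 0 := by
    rw [← transpose_transpose (Tᵀ * E), transpose_mul, transpose_transpose,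
      mul_eq_zero_of_range_mulVecLin_le_ker hT2.le, transpose_zero]
  apply rank_eq_rank_of_ker_mulVecLin_eq
  rw [ker_mulVecLin_fromRows, Matrix.mul_assoc, ker_mulVecLin_add_mul _ hT1 hTE]
end

section
/- Let E, A be real n×n matrices and let p(s) = det(sE − A), a polynomial in s with real coefficients. Let S be a matrix whose columns form an orthonormal basis of ker(E) and T a matrix whose columns form an orthonormal basis of ker(Eᵀ). Then the following are equivalent: (i) p is not the zero polynomial and deg p = rank(E); (ii) TᵀAS is nonsingular. (This expresses the equivalence of conditions 1 and 4 of Lemma 1: a matrix pencil sE − A is regular and of index at most one if and only if it has exactly rank(E) finite eigenvalues counted with multiplicity.) -/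
/-!
Extend `S` and `T` to bases `U = [S₁ S]` and `V = [T₁ T]` of `ℝⁿ`, where the columns of `S₁`
span `range Eᵀ = (ker E)ᗮ` and those of `T₁` span `range E = (ker Eᵀ)ᗮ`. Then
`Vᵀ E U = diag(E₁, 0)` with `E₁ = T₁ᵀ E S₁` invertible, and `det (s VᵀEU - VᵀAU)` is a nonzero
multiple of `p(s)`. Only its first `r = rank E` columns involve `s`, so its degree is at most `r`
and its coefficient of `s ^ r` is `det E₁ · det (-TᵀAS)`.
-/

open Matrix Polynomial Function

namespace Polynomial

theorem ne_zero_and_natDegree_eq_iff_coeff_ne_zero {R : Type*} [Semiring R] {p : R[X]} {n : ℕ}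
    (hp : p.natDegree ≤ n) : p ≠ 0 ∧ p.natDegree = n ↔ p.coeff n ≠ 0 :=
  ⟨fun ⟨hp0, hpn⟩ => hpn ▸ leadingCoeff_ne_zero.2 hp0,
    fun hn => ⟨fun hp0 => hn (by rw [hp0, coeff_zero]), natDegree_eq_of_le_of_coeff_ne_zero hp hn⟩⟩

end Polynomial

namespace Matrix

section CommRing

variable {R : Type*} [CommRing R]

noncomputable def pencilPoly {ι : Type*} [Fintype ι] [DecidableEq ι] (E A : Matrix ι ι R) :
    R[X] :=
  det ((X : R[X]) • E.map C - A.map C)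

section Blocks

variable {m o : Type*} [Fintype m] [Fintype o] [DecidableEq m] [DecidableEq o]
  (N₁ B₁₁ : Matrix m m R) (B₁₂ : Matrix m o R) (B₂₁ : Matrix o m R) (B₂₂ : Matrix o o R)

/-- Scaling the last `card o` columns by `X` leaves every entry of degree at most one, so that
`Polynomial.natDegree_det_X_add_C_le` and `Polynomial.coeff_det_X_add_C_card` apply. -/
theorem pencilPoly_fromBlocks_mul_X_pow :
    pencilPoly (fromBlocks N₁ 0 0 0) (fromBlocks B₁₁ B₁₂ B₂₁ B₂₂) * X ^ Fintype.card o =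
      det ((X : R[X]) • (fromBlocks N₁ (-B₁₂) 0 (-B₂₂)).map C +
        (fromBlocks (-B₁₁) 0 (-B₂₁) 0).map C) := by
  have hdiag : det (diagonal (Sum.elim (fun _ : m => (1 : R[X])) fun _ : o => X)) =
      X ^ Fintype.card o := by
    simp [det_diagonal, Fintype.prod_sum_type]
  rw [pencilPoly, ← hdiag, ← det_mul]
  congr 1
  refine Matrix.ext fun i j => ?_
  rcases i with i | i <;> rcases j with j | j <;> simp [mul_diagonal, sub_eq_add_neg, mul_comm X]

theorem natDegree_pencilPoly_fromBlocks_le :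
    (pencilPoly (fromBlocks N₁ 0 0 0) (fromBlocks B₁₁ B₁₂ B₂₁ B₂₂)).natDegree ≤
      Fintype.card m := by
  nontriviality R
  rcases eq_or_ne (pencilPoly (fromBlocks N₁ 0 0 0) (fromBlocks B₁₁ B₁₂ B₂₁ B₂₂)) 0 with hp | hp
  · simp [hp]
  have h := natDegree_det_X_add_C_le (fromBlocks N₁ (-B₁₂) 0 (-B₂₂)) (fromBlocks (-B₁₁) 0 (-B₂₁) 0)
  rw [← pencilPoly_fromBlocks_mul_X_pow, natDegree_mul_X_pow _ hp, Fintype.card_sum] at h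
  omega

theorem coeff_pencilPoly_fromBlocks_card :
    (pencilPoly (fromBlocks N₁ 0 0 0) (fromBlocks B₁₁ B₁₂ B₂₁ B₂₂)).coeff (Fintype.card m) =
      det N₁ * det (-B₂₂) := by
  have h := coeff_det_X_add_C_card (fromBlocks N₁ (-B₁₂) 0 (-B₂₂)) (fromBlocks (-B₁₁) 0 (-B₂₁) 0)
  rwa [← pencilPoly_fromBlocks_mul_X_pow, Fintype.card_sum, coeff_mul_X_pow,
    det_fromBlocks_zero₂₁] at h

end Blocks

theorem det_transpose_mul_mul {ι κ : Type*} [Fintype ι] [Fintype κ] [DecidableEq ι]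
    [DecidableEq κ] (e : ι ≃ κ) (V U : Matrix ι κ R) (P : Matrix ι ι R) :
    det (Vᵀ * P * U) = det (V.submatrix id e) * det P * det (U.submatrix id e) := by
  rw [← det_submatrix_equiv_self e, ← det_transpose (V.submatrix id e), ← det_mul, ← det_mul]
  rfl

theorem pencilPoly_transpose_mul_mul {ι κ : Type*} [Fintype ι] [Fintype κ] [DecidableEq ι]
    [DecidableEq κ] (e : ι ≃ κ) (V U : Matrix ι κ R) (E A : Matrix ι ι R) :
    pencilPoly (Vᵀ * E * U) (Vᵀ * A * U) =
      C (det (V.submatrix id e) * det (U.submatrix id e)) * pencilPoly E A := by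
  have h : (X : R[X]) • (Vᵀ * E * U).map C - (Vᵀ * A * U).map C =
      (V.map C)ᵀ * ((X : R[X]) • E.map C - A.map C) * U.map C := by
    simp [Matrix.map_mul, transpose_map, Matrix.mul_sub, Matrix.sub_mul]
  rw [pencilPoly, pencilPoly, h, det_transpose_mul_mul e, submatrix_map, submatrix_map, map_mul,
    RingHom.map_det, RingHom.map_det, RingHom.mapMatrix_apply, RingHom.mapMatrix_apply]
  ring

theorem mul_eq_zero_iff_range_le_ker {l m n : Type*} [Fintype m] [Fintype n] [DecidableEq n]
    {M : Matrix l m R} {N : Matrix m n R} :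
    M * N = 0 ↔ LinearMap.range N.mulVecLin ≤ LinearMap.ker M.mulVecLin := by
  rw [LinearMap.range_le_ker_iff, ← mulVecLin_mul, ← toLin'_apply', LinearEquiv.map_eq_zero_iff]

theorem mulVecLin_injective_of_mul_eq_one_s5 {m n : Type*} [Fintype m] [Fintype n] [DecidableEq n]
    {L : Matrix n m R} {S : Matrix m n R} (h : L * S = 1) : Injective S.mulVecLin :=
  fun v w hvw => by simpa [mulVec_mulVec, h] using congrArg (L *ᵥ ·) hvw

end CommRing

section Field

variable {K : Type*} [Field K]

theorem rank_add_card_eq_of_range_eq_ker {m n κ : Type*} [Fintype n] [Fintype κ]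
    {E : Matrix m n K} {S : Matrix n κ K} (hS : Injective S.mulVecLin)
    (hSE : LinearMap.range S.mulVecLin = LinearMap.ker E.mulVecLin) :
    E.rank + Fintype.card κ = Fintype.card n := by
  have h := LinearMap.finrank_range_add_finrank_ker E.mulVecLin
  rwa [← hSE, LinearMap.finrank_range_of_inj hS, Module.finrank_fintype_fun_eq_card,
    Module.finrank_fintype_fun_eq_card] at h

theorem exists_mulVecLin_injective_range_eq {m : Type*} [Fintype m]
    (W : Submodule K (m → K)) {r : ℕ} (hW : Module.finrank K W = r) :
    ∃ M : Matrix m (Fin r) K, Injective M.mulVecLin ∧ LinearMap.range M.mulVecLin = W := by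
  let f : (Fin r → K) →ₗ[K] m → K :=
    W.subtype ∘ₗ (Module.finBasisOfFinrankEq K W hW).equivFun.symm.toLinearMap
  refine ⟨LinearMap.toMatrix' f, ?_, ?_⟩ <;> rw [← toLin'_apply', toLin'_toMatrix']
  · exact W.injective_subtype.comp (LinearEquiv.injective _)
  · rw [LinearMap.range_comp, LinearEquiv.range, Submodule.map_top, Submodule.range_subtype]

theorem det_ne_zero_iff_bijective_mulVecLin {ι : Type*} [Fintype ι] [DecidableEq ι]
    {M : Matrix ι ι K} : M.det ≠ 0 ↔ Bijective M.mulVecLin := by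
  rw [← isUnit_iff_ne_zero, ← isUnit_iff_isUnit_det, ← mulVec_injective_iff_isUnit,
    ← coe_mulVecLin]
  exact ⟨fun h => ⟨h, LinearMap.injective_iff_surjective.1 h⟩, And.left⟩

theorem det_submatrix_ne_zero_of_injective {ι κ : Type*} [Fintype ι] [Fintype κ] [DecidableEq ι]
    (e : ι ≃ κ) {U : Matrix ι κ K} (hU : Injective U.mulVecLin) : det (U.submatrix id e) ≠ 0 := by
  rw [← isUnit_iff_ne_zero, ← isUnit_iff_isUnit_det, ← mulVec_injective_iff_isUnit]
  intro v w hvw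
  have h : v ∘ e.symm = w ∘ e.symm := hU (by simpa [submatrix_mulVec_equiv] using hvw)
  exact e.symm.surjective.injective_comp_right h

theorem fromCols_mulVecLin_injective {m ρ κ : Type*} [Fintype ρ] [Fintype κ] {S₁ : Matrix m ρ K}
    {S₂ : Matrix m κ K} (h₁ : Injective S₁.mulVecLin) (h₂ : Injective S₂.mulVecLin)
    (h : Disjoint (LinearMap.range S₁.mulVecLin) (LinearMap.range S₂.mulVecLin)) :
    Injective (fromCols S₁ S₂).mulVecLin := by
  rw [← LinearMap.ker_eq_bot, LinearMap.ker_eq_bot']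
  intro v hv
  rw [← Sum.elim_comp_inl_inr v] at hv ⊢
  rw [mulVecLin_apply, fromCols_mulVec_sumElim] at hv
  have h₁0 : S₁ *ᵥ (v ∘ Sum.inl) = 0 := Submodule.disjoint_def.1 h _ ⟨_, rfl⟩ <| by
    rw [eq_neg_of_add_eq_zero_left hv]
    exact neg_mem ⟨_, rfl⟩
  rw [h₁0, zero_add] at hv
  rw [h₁ (h₁0.trans (mulVec_zero _).symm), h₂ (hv.trans (mulVec_zero _).symm)]
  exact Sum.elim_zero_zero

theorem pencilPoly_ne_zero_and_natDegree_eq_iff {ι ρ κ : Type*} [Fintype ι] [Fintype ρ]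
    [Fintype κ] [DecidableEq ι] [DecidableEq ρ] [DecidableEq κ] (e : ι ≃ ρ ⊕ κ)
    (E A : Matrix ι ι K) {S₁ T₁ : Matrix ι ρ K} {S T : Matrix ι κ K}
    (hU : Injective (fromCols S₁ S).mulVecLin) (hV : Injective (fromCols T₁ T).mulVecLin)
    (hES : E * S = 0) (hTE : Tᵀ * E = 0) (hE₁ : det (T₁ᵀ * E * S₁) ≠ 0) :
    (pencilPoly E A ≠ 0 ∧ (pencilPoly E A).natDegree = Fintype.card ρ) ↔
      det (Tᵀ * A * S) ≠ 0 := by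
  have hEblocks : (fromCols T₁ T)ᵀ * E * fromCols S₁ S = fromBlocks (T₁ᵀ * E * S₁) 0 0 0 := by
    rw [transpose_fromCols, fromRows_mul, fromRows_mul_fromCols, hTE, Matrix.zero_mul,
      Matrix.zero_mul, Matrix.mul_assoc T₁ᵀ E S, hES, Matrix.mul_zero]
  have hAblocks : (fromCols T₁ T)ᵀ * A * fromCols S₁ S =
      fromBlocks (T₁ᵀ * A * S₁) (T₁ᵀ * A * S) (Tᵀ * A * S₁) (Tᵀ * A * S) := by
    rw [transpose_fromCols, fromRows_mul, fromRows_mul_fromCols]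
  have hpencil := pencilPoly_transpose_mul_mul e (fromCols T₁ T) (fromCols S₁ S) E A
  rw [hEblocks, hAblocks] at hpencil
  have hUV := mul_ne_zero (det_submatrix_ne_zero_of_injective e hV)
    (det_submatrix_ne_zero_of_injective e hU)
  have hdeg := natDegree_pencilPoly_fromBlocks_le (T₁ᵀ * E * S₁) (T₁ᵀ * A * S₁)
    (T₁ᵀ * A * S) (Tᵀ * A * S₁) (Tᵀ * A * S)
  have hcoeff := coeff_pencilPoly_fromBlocks_card (T₁ᵀ * E * S₁) (T₁ᵀ * A * S₁)
    (T₁ᵀ * A * S) (Tᵀ * A * S₁) (Tᵀ * A * S)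
  rw [hpencil, natDegree_C_mul hUV] at hdeg
  rw [hpencil, coeff_C_mul, det_neg] at hcoeff
  rw [ne_zero_and_natDegree_eq_iff_coeff_ne_zero hdeg, ← mul_ne_zero_iff_left hUV, hcoeff,
    mul_ne_zero_iff_left hE₁, mul_ne_zero_iff_left (pow_ne_zero _ (neg_ne_zero.2 one_ne_zero))]

end Field

section LinearOrderedField

variable {K : Type*} [Field K] [LinearOrder K] [IsStrictOrderedRing K] {m n : Type*} [Fintype m]
  [Fintype n]

theorem disjoint_range_mulVecLin_ker_transpose (P : Matrix m n K) :
    Disjoint (LinearMap.range P.mulVecLin) (LinearMap.ker Pᵀ.mulVecLin) := by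
  rw [Submodule.disjoint_def]
  rintro _ ⟨z, rfl⟩ hz
  have hz' : z ∈ LinearMap.ker (Pᵀ * P).mulVecLin := by
    simpa [mulVecLin_mul] using hz
  rwa [ker_mulVecLin_transpose_mul_self] at hz'

theorem det_transpose_mul_mul_ne_zero {ρ : Type*} [Fintype ρ] [DecidableEq ρ]
    {E : Matrix m m K} {S₁ T₁ : Matrix m ρ K} (hS₁ : Injective S₁.mulVecLin)
    (hS₁E : LinearMap.range S₁.mulVecLin ≤ LinearMap.range Eᵀ.mulVecLin)
    (hT₁E : LinearMap.range E.mulVecLin ≤ LinearMap.range T₁.mulVecLin) :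
    det (T₁ᵀ * E * S₁) ≠ 0 := by
  rw [← isUnit_iff_ne_zero, ← isUnit_iff_isUnit_det, ← mulVec_injective_iff_isUnit,
    ← coe_mulVecLin, ← LinearMap.ker_eq_bot, LinearMap.ker_eq_bot']
  intro v hv
  rw [mulVecLin_apply, ← mulVec_mulVec, ← mulVec_mulVec] at hv
  have hEv : E *ᵥ (S₁ *ᵥ v) = 0 :=
    Submodule.disjoint_def.1 (disjoint_range_mulVecLin_ker_transpose T₁) _ (hT₁E ⟨_, rfl⟩) hv
  have hSv : S₁ *ᵥ v = 0 :=
    Submodule.disjoint_def.1 (disjoint_range_mulVecLin_ker_transpose Eᵀ) _ (hS₁E ⟨_, rfl⟩)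
      (by rwa [transpose_transpose])
  exact hS₁ (hSv.trans (mulVec_zero _).symm)

end LinearOrderedField

end Matrix

/-- Equivalence of conditions 1 and 4 of Lemma 1: the pencil polynomial
`p(s) = det(sE − A)` is nonzero of degree `rank E` if and only if `TᵀAS` is
nonsingular, where the columns of `S` (resp. `T`) form an orthonormal basis of
`ker E` (resp. `ker Eᵀ`). -/
theorem pencil_regular_index_le_one_iff
    (n k k' : ℕ) (E A : Matrix (Fin n) (Fin n) ℝ)
    (S : Matrix (Fin n) (Fin k) ℝ) (T : Matrix (Fin n) (Fin k') ℝ)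
    (hS1 : Sᵀ * S = 1)
    (hS2 : LinearMap.range S.mulVecLin = LinearMap.ker E.mulVecLin)
    (hT1 : Tᵀ * T = 1)
    (hT2 : LinearMap.range T.mulVecLin = LinearMap.ker Eᵀ.mulVecLin) :
    (Matrix.det ((Polynomial.X : ℝ[X]) • E.map Polynomial.C - A.map Polynomial.C) ≠ 0 ∧
      (Matrix.det ((Polynomial.X : ℝ[X]) • E.map Polynomial.C - A.map Polynomial.C)).natDegree
        = E.rank) ↔
      Function.Bijective (Matrix.mulVecLin (Tᵀ * A * S)) := by
  have hS := mulVecLin_injective_of_mul_eq_one_s5 hS1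
  have hT := mulVecLin_injective_of_mul_eq_one_s5 hT1
  have hnS : E.rank + k = n := by simpa using rank_add_card_eq_of_range_eq_ker hS hS2
  have hnT : E.rank + k' = n := by
    simpa [rank_transpose] using rank_add_card_eq_of_range_eq_ker hT hT2
  obtain rfl : k = k' := by omega
  obtain ⟨S₁, hS₁, hS₁E⟩ := exists_mulVecLin_injective_range_eq _ (rank_transpose E)
  obtain ⟨T₁, hT₁, hT₁E⟩ := exists_mulVecLin_injective_range_eq (LinearMap.range E.mulVecLin) rfl
  have hU := fromCols_mulVecLin_injective hS₁ hS <| by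
    simpa only [hS₁E, hS2, transpose_transpose] using disjoint_range_mulVecLin_ker_transpose Eᵀ
  have hV := fromCols_mulVecLin_injective hT₁ hT <| by
    simpa only [hT₁E, hT2] using disjoint_range_mulVecLin_ker_transpose E
  have hES : E * S = 0 := mul_eq_zero_iff_range_le_ker.2 hS2.le
  have hTE : Tᵀ * E = 0 := by
    rw [← transpose_transpose E, ← transpose_mul, mul_eq_zero_iff_range_le_ker.2 hT2.le,
      transpose_zero]
  have hE₁ := det_transpose_mul_mul_ne_zero hS₁ hS₁E.le hT₁E.ge
  let e : Fin n ≃ Fin E.rank ⊕ Fin k := (finCongr hnS.symm).trans finSumFinEquiv.symm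
  rw [← det_ne_zero_iff_bijective_mulVecLin, ← Fintype.card_fin E.rank]
  exact pencilPoly_ne_zero_and_natDegree_eq_iff e E A hU hV hES hTE hE₁
end

section
/- Let E, A be real n×n matrices and B a real n×m matrix. Then the following are equivalent: (i) condition C0: for every pair (α, β) ∈ ℂ² with (α, β) ≠ (0,0), the n×(n+m) complex matrix [αE − βA, B] has rank n; (ii) condition C1 together with rank [E, B] = n, i.e., for every λ ∈ ℂ, rank [λE − A, B] = n, and the real matrix [E, B] has rank n. -/
/-!
Scaling one block of columns of `[αE - βA, B]` by a nonzero scalar does not change its rank. So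
for `β ≠ 0` the matrix has the rank of `[(α/β)E - A, B]`, which is the case of C1, and for
`β = 0` it has the rank of `[E, B]`. Full row rank means having a right inverse, and the real part
of a complex right inverse of a real matrix is a real right inverse, so `[E, B]` has full row rank
over `ℂ` exactly when it does over `ℝ`.
-/

open Matrix

namespace Matrix

theorem rank_eq_card_iff_exists_mul_eq_one {m ι K : Type*} [Fintype m] [DecidableEq m]
    [Fintype ι] [DecidableEq ι] [Field K] (M : Matrix m ι K) :
    M.rank = Fintype.card m ↔ ∃ X : Matrix ι m K, M * X = 1 := by
  constructor
  · intro h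
    have hrange : LinearMap.range M.mulVecLin = ⊤ :=
      Submodule.eq_top_of_finrank_eq <| by
        rw [← Matrix.rank, h, Module.finrank_fintype_fun_eq_card]
    obtain ⟨g, hg⟩ := M.mulVecLin.exists_rightInverse_of_surjective hrange
    refine ⟨LinearMap.toMatrix' g, ?_⟩
    rw [← LinearMap.toMatrix'_toLin' M, ← LinearMap.toMatrix'_comp, Matrix.toLin'_apply', hg,
      LinearMap.toMatrix'_id]
  · rintro ⟨X, hX⟩
    refine le_antisymm M.rank_le_card_height ?_
    calc Fintype.card m = (M * X).rank := by rw [hX, rank_one]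
      _ ≤ M.rank := rank_mul_le_left M X

theorem map_re_ofReal_mul {m ι : Type*} [Fintype ι] (M : Matrix m ι ℝ) (X : Matrix ι m ℂ) :
    (M.map Complex.ofReal * X).map Complex.re = M * X.map Complex.re := by
  ext i j
  simp [Matrix.mul_apply, Complex.re_sum]

theorem rank_map_ofReal_eq_card_iff {m ι : Type*} [Fintype m] [DecidableEq m] [Fintype ι]
    [DecidableEq ι] (M : Matrix m ι ℝ) :
    (M.map Complex.ofReal).rank = Fintype.card m ↔ M.rank = Fintype.card m := by
  simp only [rank_eq_card_iff_exists_mul_eq_one]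
  constructor
  · rintro ⟨X, hX⟩
    exact ⟨X.map Complex.re, by rw [← map_re_ofReal_mul, hX]; simp⟩
  · rintro ⟨X, hX⟩
    exact ⟨X.map Complex.ofReal,
      (Matrix.map_mul (f := Complex.ofRealHom)).symm.trans (by simp [hX])⟩

theorem rank_fromCols_smul_left {m n k R : Type*} [Fintype n] [DecidableEq n] [Fintype k]
    [DecidableEq k] [CommRing R] {c : R} (hc : IsUnit c) (M : Matrix m n R)
    (B : Matrix m k R) :
    (fromCols (c • M) B).rank = (fromCols M B).rank := by
  let D : Matrix (n ⊕ k) (n ⊕ k) R := diagonal (Sum.elim (fun _ => c) 1)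
  have hD : IsUnit D.det := by simp [D, det_diagonal, Fintype.prod_sum_type, hc.pow]
  calc (fromCols (c • M) B).rank = (fromCols M B * D).rank := by
        congr 1; ext i (j | j) <;> simp [D, mul_comm]
    _ = (fromCols M B).rank := rank_mul_eq_left_of_isUnit_det D _ hD

end Matrix

/-- Condition C0 holds if and only if condition C1 holds together with
`rank [E, B] = n`. Ranks of complex combinations are taken over `ℂ`. -/
theorem C0_iff_C1_and_rank
    (n m : ℕ) (E A : Matrix (Fin n) (Fin n) ℝ) (B : Matrix (Fin n) (Fin m) ℝ) :
    (∀ α β : ℂ, (α, β) ≠ (0, 0) →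
        (Matrix.fromCols (α • E.map Complex.ofReal - β • A.map Complex.ofReal)
          (B.map Complex.ofReal)).rank = n) ↔
      ((∀ lam : ℂ,
          (Matrix.fromCols (lam • E.map Complex.ofReal - A.map Complex.ofReal)
            (B.map Complex.ofReal)).rank = n) ∧
        (Matrix.fromCols E B).rank = n) := by
  have hEB : (fromCols (E.map Complex.ofReal) (B.map Complex.ofReal)).rank = n ↔
      (fromCols E B).rank = n := by
    simpa [fromCols_map] using rank_map_ofReal_eq_card_iff (fromCols E B)
  constructor
  · intro hC0
    exact ⟨fun lam => by simpa using hC0 lam 1 (by simp),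
      hEB.1 (by simpa using hC0 1 0 (by simp))⟩
  · rintro ⟨hC1, hrank⟩ α β hαβ
    rcases eq_or_ne β 0 with rfl | hβ
    · have hα : α ≠ 0 := by rintro rfl; exact hαβ rfl
      rw [zero_smul, sub_zero, rank_fromCols_smul_left hα.isUnit]
      exact hEB.2 hrank
    · have hpencil : α • E.map Complex.ofReal - β • A.map Complex.ofReal =
          β • ((α / β) • E.map Complex.ofReal - A.map Complex.ofReal) := by
        rw [smul_sub, smul_smul, mul_div_cancel₀ _ hβ]
      rw [hpencil, rank_fromCols_smul_left hβ.isUnit]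
      exact hC1 (α / β)
end
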